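/- Let A be a k-algebra, a₁, …, aₙ a finite family of elements of A, and M a left A-module. Then the k-linear map R : M ⊗ M → M ⊗ M defined by R(l ⊗ m) = ∑_{i=1}^{n} l ⊗ (a_i · m) for all l, m ∈ M is a solution of the Long equation. -/

import Mathlib

open TensorProduct

noncomputable section

variable {k M : Type*} [Field k] [AddCommGroup M] [Module k M]

/-- The flip map τ : M ⊗ M → M ⊗ M, τ(m ⊗ n) = n ⊗ m. -/
def tau (k M : Type*) [Field k] [AddCommGroup M] [Module k M] :
    M ⊗[k] M →ₗ[k] M ⊗[k] M := (TensorProduct.comm k M M).toLinearMap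

/-- R¹² = R ⊗ id on M ⊗ (M ⊗ M) (transported along the associator). -/
def R12 (R : M ⊗[k] M →ₗ[k] M ⊗[k] M) :
    M ⊗[k] (M ⊗[k] M) →ₗ[k] M ⊗[k] (M ⊗[k] M) :=
  (TensorProduct.assoc k M M M).toLinearMap ∘ₗ
    TensorProduct.map R LinearMap.id ∘ₗ (TensorProduct.assoc k M M M).symm.toLinearMap

/-- R²³ = id ⊗ R on M ⊗ (M ⊗ M). -/
def R23 (R : M ⊗[k] M →ₗ[k] M ⊗[k] M) :
    M ⊗[k] (M ⊗[k] M) →ₗ[k] M ⊗[k] (M ⊗[k] M) :=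
  TensorProduct.map LinearMap.id R

/-- R¹³ = (id ⊗ τ)(R ⊗ id)(id ⊗ τ) on M ⊗ (M ⊗ M). -/
def R13 (R : M ⊗[k] M →ₗ[k] M ⊗[k] M) :
    M ⊗[k] (M ⊗[k] M) →ₗ[k] M ⊗[k] (M ⊗[k] M) :=
  TensorProduct.map LinearMap.id (tau k M) ∘ₗ R12 R ∘ₗ
    TensorProduct.map LinearMap.id (tau k M)

/-- R is a solution of the Long equation: R¹²R¹³ = R¹³R¹² and R¹²R²³ = R²³R¹². -/
def IsLongSolution (R : M ⊗[k] M →ₗ[k] M ⊗[k] M) : Prop :=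
  R12 R ∘ₗ R13 R = R13 R ∘ₗ R12 R ∧ R12 R ∘ₗ R23 R = R23 R ∘ₗ R12 R

end

/-! `R` is `id ⊗ f` with `f = ∑ i, a i • ·`. Then `R¹²` is `f` acting on the second tensor factor,
while `R¹³` and `R²³` both are `f` acting on the third one; maps acting on different factors
commute. -/

namespace LinearMap

variable {k M : Type*} [Field k] [AddCommGroup M] [Module k M]

theorem R12_lTensor (f : M →ₗ[k] M) : R12 (f.lTensor M) = (f.rTensor M).lTensor M := by
  ext l m p
  simp [R12]

theorem R13_lTensor (f : M →ₗ[k] M) : R13 (f.lTensor M) = (f.lTensor M).lTensor M := by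
  ext l m p
  simp [R13, R12_lTensor, tau]

theorem R23_lTensor (f : M →ₗ[k] M) : R23 (f.lTensor M) = (f.lTensor M).lTensor M := rfl

theorem lTensor_rTensor_comp_lTensor_lTensor (f : M →ₗ[k] M) :
    (f.rTensor M).lTensor M ∘ₗ (f.lTensor M).lTensor M =
      (f.lTensor M).lTensor M ∘ₗ (f.rTensor M).lTensor M := by
  rw [← lTensor_comp, ← lTensor_comp, rTensor_comp_lTensor, lTensor_comp_rTensor]

theorem isLongSolution_lTensor (f : M →ₗ[k] M) : IsLongSolution (f.lTensor M) := by
  rw [IsLongSolution, R12_lTensor, R13_lTensor, R23_lTensor]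
  exact ⟨lTensor_rTensor_comp_lTensor_lTensor f, lTensor_rTensor_comp_lTensor_lTensor f⟩

end LinearMap

theorem long_equation_module_family
    {k : Type*} [Field k] {A : Type*} [Ring A] [Algebra k A]
    {M : Type*} [AddCommGroup M] [Module k M] [Module A M]
    [IsScalarTower k A M] [SMulCommClass A k M]
    (n : ℕ) (a : Fin n → A) :
    IsLongSolution (∑ i : Fin n, TensorProduct.map (LinearMap.id : M →ₗ[k] M)
      (Algebra.lsmul k k M (a i) : M →ₗ[k] M)) := by
  convert LinearMap.isLongSolution_lTensor (∑ i, (Algebra.lsmul k k M (a i) : M →ₗ[k] M))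
  exact (map_sum (LinearMap.lTensorHom M) _ _).symm
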